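/- arXiv:0903.5479 — 2 statements merged into one kernel-verified Lean document; each statement's English description precedes it below -/
import Mathlib

section
/- Let Ω be an open subset of X. Let φ ∈ D(E_D) and ψ ∈ D(E) with ψ ≥ 0, and suppose that (χ,φ) + E_D(χ,φ) ≤ (χ,ψ) + E(χ,ψ) for all χ ∈ D(E_D) with χ ≥ 0. Then φ ≤ ψ almost everywhere. -/
/-!
Write `u = φ - ψ`, with `ψ` modified on a null set to be nonnegative everywhere, and approximate
`φ` in graph norm by `g n ∈ D_Ω`. As `ψ ≥ 0`, the test function `cut (g n - ψ)` is again
compactly supported in `Ω`. The Markov property yields `E(cut w, w) ≥ 0` for every `w ∈ D(E)`,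
so testing with `w = g n - ψ` gives `(cut (g n - ψ), u) ≤ E(cut (g n - ψ), g n - φ) → 0`.
In the limit `(cut u, u) ≤ 0`; since `cut u * u ≥ 0` pointwise, `u ≤ 0` almost everywhere.
-/

open MeasureTheory Filter Topology Set ENNReal
open scoped ENNReal

namespace DirichletPaper

variable {X : Type*} [MeasurableSpace X]

/-- The unit cut-off `0 ∨ φ ∧ 1`. -/
def cut (φ : X → ℝ) : X → ℝ := fun x => max 0 (min (φ x) 1)

/-- A symmetric Dirichlet form on `L₂(X, μ)`, modelled on genuine functions with
all identifications made almost everywhere. -/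
structure DirichletForm (μ : Measure X) where
  dom : Set (X → ℝ)
  form : (X → ℝ) → (X → ℝ) → ℝ
  dom_memLp : ∀ φ ∈ dom, MemLp φ 2 μ
  zero_mem : (0 : X → ℝ) ∈ dom
  add_mem : ∀ φ ∈ dom, ∀ ψ ∈ dom, φ + ψ ∈ dom
  smul_mem : ∀ (c : ℝ), ∀ φ ∈ dom, c • φ ∈ dom
  mul_mem : ∀ φ ∈ dom, ∀ ψ ∈ dom, (∃ C, ∀ᵐ x ∂μ, |φ x| ≤ C) →
    (∃ C, ∀ᵐ x ∂μ, |ψ x| ≤ C) → φ * ψ ∈ dom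
  congr_mem : ∀ φ ∈ dom, ∀ ψ : X → ℝ, ψ =ᵐ[μ] φ → ψ ∈ dom
  congr_form : ∀ φ ∈ dom, ∀ ψ ∈ dom, ∀ φ' ∈ dom, ∀ ψ' ∈ dom, φ' =ᵐ[μ] φ → ψ' =ᵐ[μ] ψ →
    form φ' ψ' = form φ ψ
  symm : ∀ φ ψ, form φ ψ = form ψ φ
  add_left : ∀ φ ∈ dom, ∀ ψ ∈ dom, ∀ χ ∈ dom, form (φ + ψ) χ = form φ χ + form ψ χ
  smul_left : ∀ (c : ℝ), ∀ φ ∈ dom, ∀ ψ ∈ dom, form (c • φ) ψ = c * form φ ψ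
  nonneg : ∀ φ ∈ dom, 0 ≤ form φ φ
  closed : ∀ (f : ℕ → X → ℝ) (φ : X → ℝ), (∀ n, f n ∈ dom) → MemLp φ 2 μ →
    Tendsto (fun n => eLpNorm (f n - φ) 2 μ) atTop (𝓝 0) →
    (∀ ε > 0, ∃ N, ∀ m ≥ N, ∀ n ≥ N, form (f m - f n) (f m - f n) < ε) →
    φ ∈ dom ∧ Tendsto (fun n => form (f n - φ) (f n - φ)) atTop (𝓝 0)
  markov : ∀ φ ∈ dom, cut φ ∈ dom ∧ form (cut φ) (cut φ) ≤ form φ φ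

variable {μ : Measure X}

/-- The quadratic form associated with a Dirichlet form. -/
def DirichletForm.q (E : DirichletForm μ) : (X → ℝ) → ℝ := fun φ => E.form φ φ

/-- Locality: `E(ψ,φ) = 0` whenever `φ ψ = 0`. -/
def IsLocal (E : DirichletForm μ) : Prop :=
  ∀ φ ∈ E.dom, ∀ ψ ∈ E.dom, (∀ᵐ x ∂μ, φ x * ψ x = 0) → E.form ψ φ = 0

/-- Strong locality: `E(φ,ψ) = 0` whenever `(φ + a 1) ψ = 0`. -/
def IsStronglyLocal (E : DirichletForm μ) : Prop :=
  ∀ φ ∈ E.dom, ∀ ψ ∈ E.dom, ∀ a : ℝ, (∀ᵐ x ∂μ, (φ x + a) * ψ x = 0) → E.form φ ψ = 0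

/-- `D(E) ∩ C_c(X)` is dense in `C₀(X)` for the supremum norm. -/
def DenseInC0 [TopologicalSpace X] (E : DirichletForm μ) : Prop :=
  ∀ g : X → ℝ, Continuous g → Tendsto g (cocompact X) (𝓝 0) → ∀ ε > 0,
    ∃ φ ∈ E.dom, Continuous φ ∧ HasCompactSupport φ ∧ ∀ x, |φ x - g x| < ε

/-- Regularity: `D(E) ∩ C_c(X)` is dense in `C₀(X)` (sup norm) and in `D(E)` (graph norm). -/
def IsRegular [TopologicalSpace X] (E : DirichletForm μ) : Prop :=
  DenseInC0 E ∧ ∀ φ ∈ E.dom, ∀ ε > 0, ∃ ψ ∈ E.dom, Continuous ψ ∧ HasCompactSupport ψ ∧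
    (∫ x, (φ x - ψ x) ^ 2 ∂μ) + E.form (φ - ψ) (φ - ψ) < ε

/-- The squared graph norm `‖φ‖₂² + q(φ)` of a quadratic form `q`. -/
noncomputable def graphNormSq (μ : Measure X) (q : (X → ℝ) → ℝ) (φ : X → ℝ) : ℝ :=
  (∫ x, φ x ^ 2 ∂μ) + q φ

/-- `D_Ω`: the elements of the domain whose support is a compact subset of `Ω`. -/
def DOmegaGen [TopologicalSpace X] (dom : Set (X → ℝ)) (Ω : Set X) : Set (X → ℝ) :=
  {φ ∈ dom | IsCompact (tsupport φ) ∧ tsupport φ ⊆ Ω}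

/-- `D(E_D)`: the closure of `D_Ω` with respect to the graph norm. -/
def domDGen [TopologicalSpace X] (μ : Measure X) (dom : Set (X → ℝ)) (q : (X → ℝ) → ℝ)
    (Ω : Set X) : Set (X → ℝ) :=
  {φ ∈ dom | ∃ f : ℕ → X → ℝ, (∀ n, f n ∈ DOmegaGen dom Ω) ∧
    Tendsto (fun n => graphNormSq μ q (f n - φ)) atTop (𝓝 0)}

/-- The domain of the Dirichlet restriction `E_D` of `E` to an open set `Ω`. -/
def DirichletForm.domD [TopologicalSpace X] (E : DirichletForm μ) (Ω : Set X) :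
    Set (X → ℝ) :=
  domDGen μ E.dom E.q Ω

/-- The relative capacity `cap_Ω(A)` of `A ⊆ closure Ω` with respect to a form
with domain `dom` and quadratic part `q`. -/
noncomputable def relCap [TopologicalSpace X] (μ : Measure X) (dom : Set (X → ℝ))
    (q : (X → ℝ) → ℝ) (Ω A : Set X) : ℝ≥0∞ :=
  sInf {r : ℝ≥0∞ | ∃ φ ∈ dom, ∃ V : Set X, IsOpen V ∧ A ⊆ V ∧
    (∀ᵐ x ∂μ, x ∈ V ∩ Ω → 1 ≤ φ x) ∧ r = ENNReal.ofReal (graphNormSq μ q φ)}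

/-- Membership of `L₂(Ω)`, identified with `{1_Ω φ : φ ∈ L₂(X)} ⊆ L₂(X)`. -/
def MemL2 (μ : Measure X) (Ω : Set X) (φ : X → ℝ) : Prop :=
  MemLp φ 2 μ ∧ φ =ᵐ[μ] Ω.indicator φ

/-- A semigroup on `L₂(Y)` (extended to `L₂(X)` by `S_t φ = S_t (1_Y φ)`) is conservative
if `S_t 1_Y = 1_Y` for all `t > 0`. -/
def ConservativeOn (μ : Measure X) (Y : Set X) (S : ℝ → (X → ℝ) → (X → ℝ)) : Prop :=
  ∀ t > 0, S t (Y.indicator fun _ => (1 : ℝ)) =ᵐ[μ] Y.indicator fun _ => (1 : ℝ)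

/-- `S` is the submarkovian semigroup on `L₂(Y)`, extended to `L₂(X)` by
`S_t φ = S_t (1_Y φ)`, associated with the (Dirichlet) form with domain `dom` and
quadratic part `q`; the association is expressed by the standard characterisation
`q(φ) = lim_{t ↓ 0} t⁻¹ (φ, (I - S_t) φ)` with domain the set where the quotients
stay bounded.  The extension of `S` to `L_∞` is pinned down by monotone continuity. -/
structure IsSubmarkovSemigroupOn (μ : Measure X) (Y : Set X) (dom : Set (X → ℝ))
    (q : (X → ℝ) → ℝ) (S : ℝ → (X → ℝ) → (X → ℝ)) : Prop where
  proj : ∀ t > 0, ∀ φ : X → ℝ, S t φ =ᵐ[μ] S t (Y.indicator φ)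
  supported : ∀ t > 0, ∀ φ : X → ℝ, MemLp φ 2 μ → S t φ =ᵐ[μ] Y.indicator (S t φ)
  memLp : ∀ t > 0, ∀ φ : X → ℝ, MemLp φ 2 μ → MemLp (S t φ) 2 μ
  map_add : ∀ t > 0, ∀ φ ψ : X → ℝ, MemLp φ 2 μ → MemLp ψ 2 μ →
    S t (φ + ψ) =ᵐ[μ] S t φ + S t ψ
  map_smul : ∀ t > 0, ∀ (c : ℝ), ∀ φ : X → ℝ, MemLp φ 2 μ → S t (c • φ) =ᵐ[μ] c • S t φ
  semigroup : ∀ s > 0, ∀ t > 0, ∀ φ : X → ℝ, MemLp φ 2 μ →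
    S (s + t) φ =ᵐ[μ] S s (S t φ)
  symmetric : ∀ t > 0, ∀ φ ψ : X → ℝ, MemLp φ 2 μ → MemLp ψ 2 μ →
    ∫ x, S t φ x * ψ x ∂μ = ∫ x, φ x * S t ψ x ∂μ
  contraction : ∀ t > 0, ∀ φ : X → ℝ, MemLp φ 2 μ → eLpNorm (S t φ) 2 μ ≤ eLpNorm φ 2 μ
  submarkov : ∀ t > 0, ∀ φ : X → ℝ, (∀ᵐ x ∂μ, 0 ≤ φ x ∧ φ x ≤ 1) →
    ∀ᵐ x ∂μ, 0 ≤ S t φ x ∧ S t φ x ≤ 1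
  mono : ∀ t > 0, ∀ φ ψ : X → ℝ, φ ≤ᵐ[μ] ψ → S t φ ≤ᵐ[μ] S t ψ
  mono_cont : ∀ t > 0, ∀ (f : ℕ → X → ℝ) (φ : X → ℝ), (∀ n, f n ≤ᵐ[μ] f (n + 1)) →
    (∀ᵐ x ∂μ, Tendsto (fun n => f n x) atTop (𝓝 (φ x))) →
    ∀ᵐ x ∂μ, Tendsto (fun n => S t (f n) x) atTop (𝓝 (S t φ x))
  strong_cont : ∀ φ : X → ℝ, MemLp φ 2 μ →
    Tendsto (fun t => eLpNorm (S t φ - Y.indicator φ) 2 μ) (𝓝[>] 0) (𝓝 0)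
  mem_dom_iff : ∀ φ : X → ℝ, MemLp φ 2 μ → φ =ᵐ[μ] Y.indicator φ →
    ((∃ ψ ∈ dom, φ =ᵐ[μ] ψ) ↔
      BddAbove {r : ℝ | ∃ t > 0, r = t⁻¹ * ∫ x, φ x * (φ x - S t φ x) ∂μ})
  form_eq : ∀ φ ∈ dom, Tendsto (fun t : ℝ => t⁻¹ * ∫ x, φ x * (φ x - S t φ x) ∂μ)
    (𝓝[>] 0) (𝓝 (q φ))

/-- The truncated form `E_χ(φ) = E(χ φ, φ) - 2⁻¹ E(χ, φ²)` on `D(E) ∩ L_∞`. -/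
noncomputable def trunc (E : DirichletForm μ) (χ φ : X → ℝ) : ℝ :=
  E.form (χ * φ) φ - 2⁻¹ * E.form χ (φ * φ)

/-- The bounded truncations of `φ` used to extend `E_χ` by continuity to `D(E)`. -/
noncomputable def truncClip (E : DirichletForm μ) (χ φ : X → ℝ) (m : ℕ) : ℝ :=
  trunc E χ (fun x => max (-(m : ℝ)) (min (φ x) (m : ℝ)))

/-- The extension by continuity of the truncated form `E_χ` to all of `D(E)`. -/
noncomputable def truncExt (E : DirichletForm μ) (χ φ : X → ℝ) : ℝ :=
  limUnder atTop (truncClip E χ φ)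

/-- The convex set `C_Ω = {χ ∈ D(E) ∩ L_∞(X) : 0 ≤ χ ≤ 1_Ω}`. -/
def CSet (E : DirichletForm μ) (Ω : Set X) : Set (X → ℝ) :=
  {χ ∈ E.dom | ∀ᵐ x ∂μ, 0 ≤ χ x ∧ χ x ≤ Ω.indicator (fun _ => (1 : ℝ)) x}

/-- The Neumann form `E_N(φ) = sup {E_χ(φ) : χ ∈ C_Ω}` with domain `D(E)`. -/
noncomputable def neumann (E : DirichletForm μ) (Ω : Set X) (φ : X → ℝ) : ℝ :=
  sSup {r : ℝ | ∃ χ ∈ CSet E Ω, r = truncExt E χ φ}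

/-- The relaxation (lower semicontinuous regularisation) of the quadratic form `q`
with domain `dom`, as an `ℝ≥0∞`-valued function on `L₂`. -/
noncomputable def relaxVal (μ : Measure X) (dom : Set (X → ℝ)) (q : (X → ℝ) → ℝ)
    (φ : X → ℝ) : ℝ≥0∞ :=
  ⨅ (f : ℕ → X → ℝ) (_ : ∀ n, f n ∈ dom)
    (_ : Tendsto (fun n => eLpNorm (f n - φ) 2 μ) atTop (𝓝 0)),
    atTop.liminf fun n => ENNReal.ofReal (q (f n))

/-- The domain of the relaxation of `(dom, q)`. -/
def relaxDom (μ : Measure X) (dom : Set (X → ℝ)) (q : (X → ℝ) → ℝ) : Set (X → ℝ) :=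
  {φ | MemLp φ 2 μ ∧ relaxVal μ dom q φ ≠ ⊤}

/-- The quadratic form of the relaxation of `(dom, q)`. -/
noncomputable def relaxQ (μ : Measure X) (dom : Set (X → ℝ)) (q : (X → ℝ) → ℝ)
    (φ : X → ℝ) : ℝ :=
  (relaxVal μ dom q φ).toReal

/-- Closedness of a quadratic form `q` with domain `dom` on `L₂(X, μ)`. -/
def IsClosedForm (μ : Measure X) (dom : Set (X → ℝ)) (q : (X → ℝ) → ℝ) : Prop :=
  ∀ (f : ℕ → X → ℝ) (φ : X → ℝ), (∀ n, f n ∈ dom) → MemLp φ 2 μ →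
    Tendsto (fun n => eLpNorm (f n - φ) 2 μ) atTop (𝓝 0) →
    (∀ ε > 0, ∃ N, ∀ m ≥ N, ∀ n ≥ N, q (f m - f n) < ε) →
    φ ∈ dom ∧ Tendsto (fun n => q (f n - φ)) atTop (𝓝 0)

lemma sq_le_mul_of_forall_quadratic_nonneg {a b c : ℝ}
    (h : ∀ t : ℝ, 0 ≤ a + 2 * t * b + t ^ 2 * c) : b ^ 2 ≤ a * c := by
  have := discrim_le_zero (a := c) (b := 2 * b) (c := a) fun t => by linarith [h t]
  rw [discrim] at this
  linarith

lemma nonneg_of_forall_pos_quadratic_nonneg {b c : ℝ}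
    (h : ∀ t > 0, 0 ≤ 2 * t * b + t ^ 2 * c) : 0 ≤ b := by
  by_contra! hb
  set t := -b / (|c| + 1)
  have ht : 0 < t := div_pos (neg_pos.mpr hb) (by positivity)
  have htc : t * |c| ≤ -b := by
    rw [div_mul_eq_mul_div, div_le_iff₀ (by positivity)]
    nlinarith [abs_nonneg c]
  nlinarith [h t ht, mul_le_mul_of_nonneg_left (le_abs_self c) (sq_nonneg t),
    mul_le_mul_of_nonneg_left htc ht.le, mul_neg_of_pos_of_neg ht hb]

section CutOff

variable {α : Type*}

lemma lipschitzWith_cutoff : LipschitzWith 1 fun a : ℝ => max 0 (min a 1) :=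
  (LipschitzWith.id.min_const 1).const_max 0

lemma abs_cut_sub_cut_le (f g : α → ℝ) (x : α) : |cut f x - cut g x| ≤ |f x - g x| := by
  simpa only [cut, Real.dist_eq, NNReal.coe_one, one_mul] using
    lipschitzWith_cutoff.dist_le_mul (f x) (g x)

lemma cut_mul_self_nonneg (f : α → ℝ) (x : α) : 0 ≤ cut f x * f x := by
  rcases le_total (f x) 0 with hx | hx
  · simp [cut, min_eq_left (hx.trans zero_le_one), hx]
  · exact mul_nonneg (le_max_left _ _) hx

lemma nonpos_of_cut_mul_self_eq_zero {f : α → ℝ} {x : α} (h : cut f x * f x = 0) :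
    f x ≤ 0 := by
  by_contra! hx
  have hcut : 0 < cut f x := lt_max_of_lt_right (lt_min hx one_pos)
  exact (mul_pos hcut hx).ne' h

lemma cut_cut_add_smul_sub (f : α → ℝ) {t : ℝ} (ht : 0 ≤ t) :
    cut (cut f + t • (f - cut f)) = cut f := by
  funext x
  simp only [cut, Pi.add_apply, Pi.smul_apply, Pi.sub_apply, smul_eq_mul]
  rcases le_total (f x) 0 with h0 | h0
  · rw [min_eq_left (h0.trans zero_le_one), max_eq_left h0]
    have hta : t * f x ≤ 0 := mul_nonpos_of_nonneg_of_nonpos ht h0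
    rw [zero_add, sub_zero, min_eq_left (hta.trans zero_le_one), max_eq_left hta]
  rcases le_total (f x) 1 with h1 | h1
  · rw [min_eq_left h1, max_eq_right h0, sub_self, mul_zero, add_zero,
      min_eq_left h1, max_eq_right h0]
  · rw [min_eq_right h1, max_eq_right zero_le_one,
      min_eq_right (by nlinarith : (1 : ℝ) ≤ 1 + t * (f x - 1)), max_eq_right zero_le_one]

lemma tsupport_cut_sub_subset [TopologicalSpace α] (g : α → ℝ) {ψ : α → ℝ}
    (hψ : ∀ x, 0 ≤ ψ x) : tsupport (cut (g - ψ)) ⊆ tsupport g := by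
  refine closure_mono fun x hx => ?_
  contrapose! hx
  have hgx : g x = 0 := by simpa using hx
  simp only [Function.mem_support, ne_eq, not_not, cut, Pi.sub_apply, hgx, zero_sub]
  exact max_eq_left ((min_le_left _ _).trans (neg_nonpos.mpr (hψ x)))

end CutOff

section L2

variable {f g : X → ℝ}

lemma integral_mul_le_sqrt (hf : MemLp f 2 μ) (hg : MemLp g 2 μ) :
    ∫ x, f x * g x ∂μ ≤ √((∫ x, f x ^ 2 ∂μ) * ∫ x, g x ^ 2 ∂μ) := by
  refine Real.le_sqrt_of_sq_le (sq_le_mul_of_forall_quadratic_nonneg fun t => ?_)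
  have hfg : Integrable (fun x => 2 * t * (f x * g x)) μ :=
    (hf.integrable_mul hg).const_mul _
  have hg2 : Integrable (fun x => t ^ 2 * g x ^ 2) μ := hg.integrable_sq.const_mul _
  have hffg : Integrable (fun x => f x ^ 2 + 2 * t * (f x * g x)) μ :=
    hf.integrable_sq.add hfg
  calc 0 ≤ ∫ x, (f x + t * g x) ^ 2 ∂μ := integral_nonneg fun x => sq_nonneg _
    _ = ∫ x, (f x ^ 2 + 2 * t * (f x * g x) + t ^ 2 * g x ^ 2) ∂μ := by
      congr 1; ext x; ring
    _ = (∫ x, f x ^ 2 ∂μ) + (∫ x, 2 * t * (f x * g x) ∂μ) + ∫ x, t ^ 2 * g x ^ 2 ∂μ := by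
      rw [← integral_add hf.integrable_sq hfg, ← integral_add hffg hg2]
    _ = _ := by rw [integral_const_mul, integral_const_mul]

lemma ae_nonpos_of_integral_cut_mul_self_nonpos {u : X → ℝ} (hcu : MemLp (cut u) 2 μ)
    (hu : MemLp u 2 μ) (h : ∫ x, cut u x * u x ∂μ ≤ 0) : u ≤ᵐ[μ] 0 := by
  have hnn : 0 ≤ fun x => cut u x * u x := cut_mul_self_nonneg u
  have hzero := (integral_eq_zero_iff_of_nonneg hnn (hcu.integrable_mul hu)).mp
    (le_antisymm h (integral_nonneg hnn))
  filter_upwards [hzero] with x hx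
  exact nonpos_of_cut_mul_self_eq_zero hx

lemma integral_cut_sub_mul_le {φ ψ g u : X → ℝ} (hφ : MemLp (cut (φ - ψ)) 2 μ)
    (hg : MemLp (cut (g - ψ)) 2 μ) (hd : MemLp (g - φ) 2 μ) (hu : MemLp u 2 μ) :
    ∫ x, cut (φ - ψ) x * u x ∂μ ≤
      (∫ x, cut (g - ψ) x * u x ∂μ) + √((∫ x, (g - φ) x ^ 2 ∂μ) * ∫ x, u x ^ 2 ∂μ) := by
  have hdiff := hφ.sub hg
  have hsplit : ∫ x, cut (φ - ψ) x * u x ∂μ =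
      (∫ x, cut (g - ψ) x * u x ∂μ) + ∫ x, (cut (φ - ψ) - cut (g - ψ)) x * u x ∂μ := by
    have h1 : Integrable (fun x => cut (g - ψ) x * u x) μ := hg.integrable_mul hu
    have h2 : Integrable (fun x => (cut (φ - ψ) - cut (g - ψ)) x * u x) μ :=
      hdiff.integrable_mul hu
    rw [← integral_add h1 h2]
    congr 1; ext x; simp only [Pi.sub_apply]; ring
  have hsq : ∫ x, (cut (φ - ψ) - cut (g - ψ)) x ^ 2 ∂μ ≤ ∫ x, (g - φ) x ^ 2 ∂μ := by
    refine integral_mono hdiff.integrable_sq hd.integrable_sq fun x => ?_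
    rw [← sq_abs, ← sq_abs ((g - φ) x)]
    refine pow_le_pow_left₀ (abs_nonneg _) ((abs_cut_sub_cut_le _ _ x).trans_eq ?_) 2
    rw [abs_sub_comm]
    simp only [Pi.sub_apply, sub_sub_sub_cancel_right]
  rw [hsplit]
  gcongr
  refine (integral_mul_le_sqrt hdiff hu).trans ?_
  gcongr

end L2

namespace DirichletForm

variable (E : DirichletForm μ) {f g h : X → ℝ}

lemma sub_mem (hf : f ∈ E.dom) (hg : g ∈ E.dom) : f - g ∈ E.dom := by
  simpa [sub_eq_add_neg] using E.add_mem f hf _ (E.smul_mem (-1) g hg)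

lemma form_add_right (hf : f ∈ E.dom) (hg : g ∈ E.dom) (hh : h ∈ E.dom) :
    E.form f (g + h) = E.form f g + E.form f h := by
  rw [E.symm, E.add_left g hg h hh f hf, E.symm g, E.symm h]

lemma form_smul_right (c : ℝ) (hf : f ∈ E.dom) (hg : g ∈ E.dom) :
    E.form f (c • g) = c * E.form f g := by
  rw [E.symm, E.smul_left c g hg f hf, E.symm g]

lemma form_sub_right (hf : f ∈ E.dom) (hg : g ∈ E.dom) (hh : h ∈ E.dom) :
    E.form f (g - h) = E.form f g - E.form f h := by
  rw [sub_eq_add_neg, ← neg_one_smul ℝ h, E.form_add_right hf hg (E.smul_mem (-1) h hh),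
    E.form_smul_right (-1) hf hh]
  ring

lemma q_zero : E.q 0 = 0 := by
  simpa [q] using E.smul_left 0 0 E.zero_mem 0 E.zero_mem

lemma q_add_smul (t : ℝ) (hf : f ∈ E.dom) (hg : g ∈ E.dom) :
    E.q (f + t • g) = E.q f + 2 * t * E.form f g + t ^ 2 * E.q g := by
  have htg := E.smul_mem t g hg
  simp only [q]
  rw [E.add_left f hf _ htg _ (E.add_mem f hf _ htg), E.form_add_right hf hf htg,
    E.form_add_right htg hf htg, E.smul_left t g hg f hf, E.smul_left t g hg _ htg,
    E.form_smul_right t hg hg, E.form_smul_right t hf hg, E.symm g f]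
  ring

lemma abs_form_le_sqrt (hf : f ∈ E.dom) (hg : g ∈ E.dom) :
    |E.form f g| ≤ √(E.q f * E.q g) :=
  Real.abs_le_sqrt <| sq_le_mul_of_forall_quadratic_nonneg fun t => by
    rw [← E.q_add_smul t hf hg]
    exact E.nonneg _ (E.add_mem f hf _ (E.smul_mem t g hg))

lemma tendsto_q_add {d : ℕ → X → ℝ} (hf : f ∈ E.dom) (hd : ∀ n, d n ∈ E.dom)
    (hq : Tendsto (fun n => E.q (d n)) atTop (𝓝 0)) :
    Tendsto (fun n => E.q (f + d n)) atTop (𝓝 (E.q f)) := by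
  have hform : Tendsto (fun n => E.form f (d n)) atTop (𝓝 0) := by
    refine squeeze_zero_norm (fun n => E.abs_form_le_sqrt hf (hd n)) ?_
    simpa using (hq.const_mul (E.q f)).sqrt
  have hsum := ((hform.const_mul 2).const_add (E.q f)).add hq
  simp only [mul_zero, add_zero] at hsum
  refine hsum.congr fun n => ?_
  rw [← one_smul ℝ (d n), E.q_add_smul 1 hf (hd n), one_smul]
  ring

/-- Markov property along the segment from `cut f` to `f`, on which `cut` is constant. -/
lemma form_cut_self_nonneg (hf : f ∈ E.dom) : 0 ≤ E.form (cut f) f := by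
  obtain ⟨hcf, -⟩ := E.markov f hf
  have hd := E.sub_mem hf hcf
  have hcross : 0 ≤ E.form (cut f) (f - cut f) :=
    nonneg_of_forall_pos_quadratic_nonneg fun t ht => by
      have hmarkov := (E.markov _ (E.add_mem _ hcf _ (E.smul_mem t _ hd))).2
      rw [cut_cut_add_smul_sub f ht.le] at hmarkov
      have hexp := E.q_add_smul t hcf hd
      simp only [q] at hexp
      linarith
  have hsplit := E.form_add_right hcf hcf hd
  rw [add_sub_cancel] at hsplit
  linarith [E.nonneg _ hcf]

lemma tendsto_of_tendsto_graphNormSq {d : ℕ → X → ℝ} (hd : ∀ n, d n ∈ E.dom)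
    (h : Tendsto (fun n => graphNormSq μ E.q (d n)) atTop (𝓝 0)) :
    Tendsto (fun n => ∫ x, d n x ^ 2 ∂μ) atTop (𝓝 0) ∧
      Tendsto (fun n => E.q (d n)) atTop (𝓝 0) := by
  have hI : ∀ n, 0 ≤ ∫ x, d n x ^ 2 ∂μ := fun n => integral_nonneg fun x => sq_nonneg _
  have hq : ∀ n, 0 ≤ E.q (d n) := fun n => E.nonneg _ (hd n)
  exact ⟨squeeze_zero hI (fun n => le_add_of_nonneg_right (hq n)) h,
    squeeze_zero hq (fun n => le_add_of_nonneg_left (hI n)) h⟩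

lemma integral_cut_mul_sub_le_sqrt {g φ ψ : X → ℝ} (hg : g ∈ E.dom) (hφ : φ ∈ E.dom)
    (hψ : ψ ∈ E.dom)
    (h : (∫ x, cut (g - ψ) x * φ x ∂μ) + E.form (cut (g - ψ)) φ ≤
      (∫ x, cut (g - ψ) x * ψ x ∂μ) + E.form (cut (g - ψ)) ψ) :
    ∫ x, cut (g - ψ) x * (φ - ψ) x ∂μ ≤ √(E.q (g - ψ) * E.q (g - φ)) := by
  have hw := E.sub_mem hg hψ
  have hχ := (E.markov _ hw).1
  have hχ2 := E.dom_memLp _ hχ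
  have hint : ∫ x, cut (g - ψ) x * (φ - ψ) x ∂μ =
      (∫ x, cut (g - ψ) x * φ x ∂μ) - ∫ x, cut (g - ψ) x * ψ x ∂μ := by
    simp only [Pi.sub_apply, mul_sub]
    exact integral_sub (hχ2.integrable_mul (E.dom_memLp _ hφ))
      (hχ2.integrable_mul (E.dom_memLp _ hψ))
  have hcs : E.form (cut (g - ψ)) (g - φ) ≤ √(E.q (g - ψ) * E.q (g - φ)) := by
    refine (le_abs_self _).trans ((E.abs_form_le_sqrt hχ (E.sub_mem hg hφ)).trans ?_)
    gcongr
    · exact E.nonneg _ (E.sub_mem hg hφ)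
    · exact (E.markov _ hw).2
  have := E.form_cut_self_nonneg hw
  rw [E.form_sub_right hχ hg hψ] at this
  rw [E.form_sub_right hχ hg hφ] at hcs
  linarith

section Restriction

variable [TopologicalSpace X] {Ω : Set X}

lemma DOmegaGen_subset_domD : DOmegaGen E.dom Ω ⊆ E.domD Ω :=
  fun f hf => ⟨hf.1, fun _ => f, fun _ => hf, by simp [graphNormSq, E.q_zero]⟩

lemma cut_sub_mem_DOmegaGen {g ψ : X → ℝ} (hg : g ∈ DOmegaGen E.dom Ω)
    (hψ : ψ ∈ E.dom) (hψ0 : ∀ x, 0 ≤ ψ x) : cut (g - ψ) ∈ DOmegaGen E.dom Ω :=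
  have hts := tsupport_cut_sub_subset g hψ0
  ⟨(E.markov _ (E.sub_mem hg.1 hψ)).1, hg.2.1.of_isClosed_subset (isClosed_tsupport _) hts,
    hts.trans hg.2.2⟩

theorem ae_le_of_forall_test_le {φ ψ : X → ℝ} (hφ : φ ∈ E.domD Ω)
    (hψ : ψ ∈ E.dom) (hψ0 : ∀ x, 0 ≤ ψ x)
    (h : ∀ χ ∈ E.domD Ω, (0 : X → ℝ) ≤ᵐ[μ] χ →
      (∫ x, χ x * φ x ∂μ) + E.form χ φ ≤ (∫ x, χ x * ψ x ∂μ) + E.form χ ψ) :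
    φ ≤ᵐ[μ] ψ := by
  obtain ⟨hφdom, g, hgD, hg⟩ := hφ
  have hu := E.sub_mem hφdom hψ
  have hd n := E.sub_mem (hgD n).1 hφdom
  have hw n := E.sub_mem (hgD n).1 hψ
  have hbound n : ∫ x, cut (φ - ψ) x * (φ - ψ) x ∂μ ≤
      √(E.q (g n - ψ) * E.q (g n - φ)) +
        √((∫ x, (g n - φ) x ^ 2 ∂μ) * ∫ x, (φ - ψ) x ^ 2 ∂μ) := by
    have hχ := E.DOmegaGen_subset_domD (E.cut_sub_mem_DOmegaGen (hgD n) hψ hψ0)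
    have htest := h _ hχ (Eventually.of_forall fun x => le_max_left _ _)
    refine (integral_cut_sub_mul_le (E.dom_memLp _ (E.markov _ hu).1)
      (E.dom_memLp _ (E.markov _ (hw n)).1) (E.dom_memLp _ (hd n)) (E.dom_memLp _ hu)).trans ?_
    gcongr
    exact E.integral_cut_mul_sub_le_sqrt (hgD n).1 hφdom hψ htest
  obtain ⟨hI, hq⟩ := E.tendsto_of_tendsto_graphNormSq hd hg
  have hqw : Tendsto (fun n => E.q (g n - ψ)) atTop (𝓝 (E.q (φ - ψ))) := by
    refine (E.tendsto_q_add hu hd hq).congr fun n => ?_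
    congr 1; ext x; simp only [Pi.add_apply, Pi.sub_apply]; ring
  have hlim := ((hqw.mul hq).sqrt).add ((hI.mul_const (∫ x, (φ - ψ) x ^ 2 ∂μ)).sqrt)
  simp only [mul_zero, zero_mul, Real.sqrt_zero, add_zero] at hlim
  filter_upwards [ae_nonpos_of_integral_cut_mul_self_nonpos (E.dom_memLp _ (E.markov _ hu).1)
    (E.dom_memLp _ hu) (ge_of_tendsto' hlim hbound)] with x hx
  exact sub_nonpos.mp hx

end Restriction

end DirichletForm

section Statements

variable [MetricSpace X] [BorelSpace X] [LocallyCompactSpace X] [SigmaCompactSpace X]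
variable {μ : Measure X} [Measure.Regular μ] [Measure.IsOpenPosMeasure μ]

theorem statement5_general (E : DirichletForm μ)
    (Ω : Set X) (φ ψ : X → ℝ)
    (hφ : φ ∈ E.domD Ω) (hψ : ψ ∈ E.dom) (hψ0 : (0 : X → ℝ) ≤ᵐ[μ] ψ)
    (h : ∀ χ ∈ E.domD Ω, (0 : X → ℝ) ≤ᵐ[μ] χ →
      (∫ x, χ x * φ x ∂μ) + E.form χ φ ≤ (∫ x, χ x * ψ x ∂μ) + E.form χ ψ) :
    φ ≤ᵐ[μ] ψ := by
  set ψ' : X → ℝ := fun x => max (ψ x) 0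
  have hψ'ψ : ψ' =ᵐ[μ] ψ := hψ0.mono fun x hx => max_eq_left hx
  have hψ' : ψ' ∈ E.dom := E.congr_mem ψ hψ ψ' hψ'ψ
  have h' : ∀ χ ∈ E.domD Ω, (0 : X → ℝ) ≤ᵐ[μ] χ →
      (∫ x, χ x * φ x ∂μ) + E.form χ φ ≤ (∫ x, χ x * ψ' x ∂μ) + E.form χ ψ' := by
    intro χ hχ hχ0
    have hint : ∫ x, χ x * ψ' x ∂μ = ∫ x, χ x * ψ x ∂μ :=
      integral_congr_ae (hψ'ψ.mono fun x hx => by simp only [hx])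
    rw [hint, E.congr_form χ hχ.1 ψ hψ χ hχ.1 ψ' hψ' EventuallyEq.rfl hψ'ψ]
    exact h χ hχ hχ0
  filter_upwards [E.ae_le_of_forall_test_le hφ hψ' (fun x => le_max_right _ _) h', hψ'ψ]
    with x hx hx'
  exact hx.trans_eq hx'

/-- If `φ ∈ D(E_D)` and `0 ≤ ψ ∈ D(E)` satisfy
`(χ,φ) + E_D(χ,φ) ≤ (χ,ψ) + E(χ,ψ)` for all `0 ≤ χ ∈ D(E_D)`, then `φ ≤ ψ`. -/
theorem statement5 (E : DirichletForm μ) (hloc : IsLocal E) (hdense : DenseInC0 E)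
    (Ω : Set X) (hΩ : IsOpen Ω) (φ ψ : X → ℝ)
    (hφ : φ ∈ E.domD Ω) (hψ : ψ ∈ E.dom) (hψ0 : (0 : X → ℝ) ≤ᵐ[μ] ψ)
    (h : ∀ χ ∈ E.domD Ω, (0 : X → ℝ) ≤ᵐ[μ] χ →
      (∫ x, χ x * φ x ∂μ) + E.form χ φ ≤ (∫ x, χ x * ψ x ∂μ) + E.form χ ψ) :
    φ ≤ᵐ[μ] ψ :=
  statement5_general E Ω φ ψ hφ hψ hψ0 h

end Statements

end DirichletPaper
end

section
/- Let Ω be an open subset of X. If S^D_t φ = S^N_t φ for all φ ∈ L₂(Ω) and all t > 0, then L₂(Ω) is S^N-invariant and cap_Ω(∂Ω) = 0. -/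
/-!
Since `S^D_t φ` is supported in `Ω`, the hypothesis makes `L₂(Ω)` invariant under `S^N`, and by
symmetry so is `L₂(Ωᶜ)`. The quadratic form of `I - S^N_t` then splits along
`L₂(Ω) ⊕ L₂(Ωᶜ)`, whence `(1_Ω η, (I - S^D_t) 1_Ω η) ≤ (η, (I - S^N_t) η)` for
`η ∈ D(E) ⊆ D(Ê_N)`, and the semigroup characterisation of form domains gives
`1_Ω η ∈ D(E_D)`. For compact `K ⊆ ∂Ω` take `η ∈ D(E)` with `η ≥ 1` near `K` and `φ ∈ D_Ω` close
to `1_Ω η` in graph norm: `1_Ω η - φ` is small and equals `η` on `Ω` near `K`, so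
`cap_Ω(K) = 0`. Finally `∂Ω` is a countable union of such `K`, and null sets of `cap_Ω` are
stable under countable unions: the cut-off witnesses with geometrically decreasing graph norms
are summed, the sum converging in `D(E)` because `E` is closed.
-/

open MeasureTheory Filter Topology Set ENNReal
open scoped ENNReal

namespace DirichletPaper

variable {X : Type*} [MeasurableSpace X]

variable {μ : Measure X}

section L2

variable {μ : Measure X}

lemma integral_sq_eq_sq_toReal_eLpNorm {f : X → ℝ} (hf : MemLp f 2 μ) :
    ∫ x, f x ^ 2 ∂μ = (eLpNorm f 2 μ).toReal ^ 2 := by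
  have h : 0 ≤ ∫ x, f x ^ 2 ∂μ := integral_nonneg fun x => sq_nonneg (f x)
  rw [hf.eLpNorm_eq_integral_rpow_norm two_ne_zero ENNReal.ofNat_ne_top,
    ENNReal.toReal_ofReal (by positivity)]
  simp only [ENNReal.toReal_ofNat, Real.rpow_two, Real.norm_eq_abs, sq_abs]
  rw [← Real.rpow_natCast, ← Real.rpow_mul h]
  norm_num

lemma ae_le_of_tendsto_eLpNorm {f : ℕ → X → ℝ} {g Φ : X → ℝ}
    (hf : ∀ n, AEStronglyMeasurable (f n) μ) (hΦ : AEStronglyMeasurable Φ μ)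
    (hlim : Tendsto (fun n => eLpNorm (f n - Φ) 2 μ) atTop (𝓝 0))
    (hle : ∀ᶠ n in atTop, g ≤ᵐ[μ] f n) : g ≤ᵐ[μ] Φ := by
  obtain ⟨ns, hns, hae⟩ :=
    (tendstoInMeasure_of_tendsto_eLpNorm two_ne_zero hf hΦ hlim).exists_seq_tendsto_ae
  obtain ⟨N, hN⟩ := hle.exists_forall_of_atTop
  have hle' : ∀ᵐ x ∂μ, ∀ n ≥ N, g x ≤ f n x := by
    rw [ae_all_iff]
    intro n
    by_cases hn : n ≥ N
    · filter_upwards [hN n hn] with x hx _ using hx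
    · exact ae_of_all _ fun x h => absurd h hn
  filter_upwards [hae, hle'] with x hx hgx
  exact ge_of_tendsto hx ((hns.tendsto_atTop.eventually_ge_atTop N).mono fun n hn => hgx _ hn)

lemma integrable_mul_of_memLp_two {f g : X → ℝ} (hf : MemLp f 2 μ) (hg : MemLp g 2 μ) :
    Integrable (fun x => f x * g x) μ :=
  hf.integrable_mul hg

end L2

namespace DirichletForm

variable {μ : Measure X} (E : DirichletForm μ)

def domSubmodule : Submodule ℝ (X → ℝ) where
  carrier := E.dom
  add_mem' ha hb := E.add_mem _ ha _ hb
  zero_mem' := E.zero_mem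
  smul_mem' c _ ha := E.smul_mem c _ ha

lemma form_add_right_s10 {a b c : X → ℝ} (ha : a ∈ E.dom) (hb : b ∈ E.dom) (hc : c ∈ E.dom) :
    E.form a (b + c) = E.form a b + E.form a c := by
  rw [E.symm, E.add_left b hb c hc a ha, E.symm a b, E.symm a c]

lemma form_smul_right_s10 (r : ℝ) {a b : X → ℝ} (ha : a ∈ E.dom) (hb : b ∈ E.dom) :
    E.form a (r • b) = r * E.form a b := by
  rw [E.symm, E.smul_left r b hb a ha, E.symm]

lemma q_neg {a : X → ℝ} (ha : a ∈ E.dom) : E.q (-a) = E.q a := by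
  have hna : (-1 : ℝ) • a ∈ E.dom := E.smul_mem (-1) a ha
  simp only [q, ← neg_one_smul ℝ a, E.smul_left (-1) a ha _ hna, E.form_smul_right_s10 (-1) ha ha]
  ring

noncomputable def graphForm : LinearMap.BilinForm ℝ E.domSubmodule :=
  LinearMap.mk₂ ℝ (fun a b => (∫ x, a.1 x * b.1 x ∂μ) + E.form a b)
    (fun a₁ a₂ b => by
      simp only [Submodule.coe_add, Pi.add_apply, add_mul, E.add_left _ a₁.2 _ a₂.2 _ b.2,
        integral_add (integrable_mul_of_memLp_two (E.dom_memLp _ a₁.2) (E.dom_memLp _ b.2))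
          (integrable_mul_of_memLp_two (E.dom_memLp _ a₂.2) (E.dom_memLp _ b.2))]
      ring)
    (fun c a b => by
      simp only [SetLike.val_smul, Pi.smul_apply, smul_eq_mul, mul_assoc, integral_const_mul,
        E.smul_left c _ a.2 _ b.2]
      ring)
    (fun a b₁ b₂ => by
      simp only [Submodule.coe_add, Pi.add_apply, mul_add, E.form_add_right_s10 a.2 b₁.2 b₂.2,
        integral_add (integrable_mul_of_memLp_two (E.dom_memLp _ a.2) (E.dom_memLp _ b₁.2))
          (integrable_mul_of_memLp_two (E.dom_memLp _ a.2) (E.dom_memLp _ b₂.2))]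
      ring)
    (fun c a b => by
      simp only [SetLike.val_smul, Pi.smul_apply, smul_eq_mul, mul_left_comm _ c,
        integral_const_mul, E.form_smul_right_s10 c a.2 b.2]
      ring)

lemma graphForm_self (a : E.domSubmodule) : E.graphForm a a = graphNormSq μ E.q a := by
  simp [graphForm, graphNormSq, q, sq]

lemma graphNormSq_nonneg {a : X → ℝ} (ha : a ∈ E.dom) : 0 ≤ graphNormSq μ E.q a :=
  add_nonneg (integral_nonneg fun x => sq_nonneg (a x)) (E.nonneg a ha)

lemma sqrt_graphNormSq_add_le {a b : X → ℝ} (ha : a ∈ E.dom) (hb : b ∈ E.dom) :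
    √(graphNormSq μ E.q (a + b)) ≤ √(graphNormSq μ E.q a) + √(graphNormSq μ E.q b) := by
  set B := E.graphForm with hB
  let a' : E.domSubmodule := ⟨a, ha⟩
  let b' : E.domSubmodule := ⟨b, hb⟩
  have hpos : ∀ c, 0 ≤ B c c := fun c => (E.graphForm_self c).symm ▸ E.graphNormSq_nonneg c.2
  have hsymm : B b' a' = B a' b' := by
    show (∫ x, b x * a x ∂μ) + E.form b a = (∫ x, a x * b x ∂μ) + E.form a b
    simp only [mul_comm (b _), E.symm b a]
  have hcs : B a' b' ≤ √(B a' a') * √(B b' b') := by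
    rw [← Real.sqrt_mul (hpos a')]
    refine (le_abs_self _).trans (Real.abs_le_sqrt ?_)
    simpa [sq, hsymm] using B.apply_mul_apply_le_of_forall_zero_le hpos a' b'
  have hexp : graphNormSq μ E.q (a + b) = B a' a' + 2 * B a' b' + B b' b' := by
    rw [show a + b = ((a' + b' : E.domSubmodule) : X → ℝ) from rfl, ← E.graphForm_self,
      ← hB]
    simp only [map_add, LinearMap.add_apply, hsymm]
    ring
  rw [hexp, show graphNormSq μ E.q a = B a' a' from (E.graphForm_self a').symm,
    show graphNormSq μ E.q b = B b' b' from (E.graphForm_self b').symm,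
    Real.sqrt_le_iff]
  refine ⟨by positivity, ?_⟩
  nlinarith [Real.sq_sqrt (hpos a'), Real.sq_sqrt (hpos b')]

lemma graphNormSq_sub_comm {a b : X → ℝ} (ha : a ∈ E.dom) (hb : b ∈ E.dom) :
    graphNormSq μ E.q (a - b) = graphNormSq μ E.q (b - a) := by
  rw [← neg_sub b a]
  simp only [graphNormSq, Pi.neg_apply, neg_sq, E.q_neg (E.domSubmodule.sub_mem hb ha)]

lemma sqrt_graphNormSq_sum_le {ι : Type*} (s : Finset ι) {c : ι → X → ℝ}
    (hc : ∀ i ∈ s, c i ∈ E.dom) :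
    √(graphNormSq μ E.q (∑ i ∈ s, c i)) ≤ ∑ i ∈ s, √(graphNormSq μ E.q (c i)) := by
  have hzero : E.form 0 0 = 0 := by simpa using E.smul_left 0 0 E.zero_mem 0 E.zero_mem
  refine Finset.le_sum_of_subadditive_on_pred (fun a => √(graphNormSq μ E.q a)) (· ∈ E.dom)
    ?_ (fun a b ha hb => E.sqrt_graphNormSq_add_le ha hb) (fun a b ha hb => E.add_mem a ha b hb)
    c hc
  simp [graphNormSq, q, hzero]

lemma sq_toReal_eLpNorm_le_graphNormSq {a : X → ℝ} (ha : a ∈ E.dom) :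
    (eLpNorm a 2 μ).toReal ^ 2 ≤ graphNormSq μ E.q a := by
  rw [← integral_sq_eq_sq_toReal_eLpNorm (E.dom_memLp a ha)]
  exact le_add_of_nonneg_right (E.nonneg a ha)

lemma graphNormSq_cut_le {a : X → ℝ} (ha : a ∈ E.dom) :
    graphNormSq μ E.q (cut a) ≤ graphNormSq μ E.q a := by
  refine add_le_add ?_ (E.markov a ha).2
  refine integral_mono_of_nonneg (ae_of_all _ fun x => sq_nonneg _)
    (E.dom_memLp a ha).integrable_sq (ae_of_all _ fun x => ?_)
  rw [sq_le_sq, cut, abs_of_nonneg (le_max_left _ _)]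
  exact max_le (abs_nonneg _) ((min_le_left _ _).trans (le_abs_self _))

lemma exists_tendsto_of_cauchy {f : ℕ → X → ℝ} (hf : ∀ n, f n ∈ E.dom)
    (hcau : ∀ ε > 0, ∃ N, ∀ m ≥ N, ∀ n ≥ N, graphNormSq μ E.q (f m - f n) < ε) :
    ∃ Φ ∈ E.dom, Tendsto (fun n => eLpNorm (f n - Φ) 2 μ) atTop (𝓝 0) ∧
      Tendsto (fun n => graphNormSq μ E.q (f n - Φ)) atTop (𝓝 0) := by
  have hLp n : MemLp (f n) 2 μ := E.dom_memLp _ (hf n)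
  have hF : CauchySeq fun n => (hLp n).toLp (f n) := by
    refine Metric.cauchySeq_iff.2 fun ε hε => ?_
    obtain ⟨N, hN⟩ := hcau (ε ^ 2) (by positivity)
    refine ⟨N, fun m hm n hn => ?_⟩
    rw [dist_eq_norm, ← MemLp.toLp_sub, Lp.norm_toLp]
    exact lt_of_pow_lt_pow_left₀ 2 hε.le <|
      (E.sq_toReal_eLpNorm_le_graphNormSq (E.domSubmodule.sub_mem (hf m) (hf n))).trans_lt
        (hN m hm n hn)
  obtain ⟨G, hG⟩ := cauchySeq_tendsto_of_complete hF
  have hL2 : Tendsto (fun n => eLpNorm (f n - (G : X → ℝ)) 2 μ) atTop (𝓝 0) :=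
    (Lp.tendsto_Lp_iff_tendsto_eLpNorm'' f hLp G (Lp.memLp G)).1 (by rwa [Lp.toLp_coeFn])
  have hcauq : ∀ ε > 0, ∃ N, ∀ m ≥ N, ∀ n ≥ N, E.form (f m - f n) (f m - f n) < ε :=
    fun ε hε => (hcau ε hε).imp fun N hN m hm n hn =>
      (le_add_of_nonneg_left (integral_nonneg fun x => sq_nonneg _)).trans_lt (hN m hm n hn)
  obtain ⟨hGdom, hq⟩ := E.closed f G hf (Lp.memLp G) hL2 hcauq
  refine ⟨G, hGdom, hL2, ?_⟩
  have hL2' : Tendsto (fun n => (eLpNorm (f n - (G : X → ℝ)) 2 μ).toReal ^ 2) atTop (𝓝 0) := by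
    simpa using ((ENNReal.tendsto_toReal zero_ne_top).comp hL2).pow 2
  refine (add_zero (0 : ℝ) ▸ hL2'.add hq).congr fun n => ?_
  rw [graphNormSq, integral_sq_eq_sq_toReal_eLpNorm ((hLp n).sub (Lp.memLp G))]
  rfl

lemma cauchy_sum_range {c : ℕ → X → ℝ} (hc : ∀ k, c k ∈ E.dom) {r : ℕ → ℝ}
    (hr : Summable r) (hcr : ∀ k, √(graphNormSq μ E.q (c k)) ≤ r k) :
    ∀ ε > 0, ∃ N, ∀ m ≥ N, ∀ n ≥ N,
      graphNormSq μ E.q (∑ k ∈ Finset.range m, c k - ∑ k ∈ Finset.range n, c k) < ε := by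
  set S := fun n => ∑ k ∈ Finset.range n, c k
  set R := fun n => ∑ k ∈ Finset.range n, r k
  have hS n : S n ∈ E.dom := E.domSubmodule.sum_mem fun k _ => hc k
  have hsub : ∀ m n, n ≤ m → √(graphNormSq μ E.q (S m - S n)) ≤ dist (R m) (R n) := by
    intro m n hnm
    calc √(graphNormSq μ E.q (S m - S n))
        = √(graphNormSq μ E.q (∑ k ∈ Finset.Ico n m, c k)) := by
          rw [Finset.sum_Ico_eq_sub _ hnm]
      _ ≤ ∑ k ∈ Finset.Ico n m, r k :=
          (E.sqrt_graphNormSq_sum_le _ fun k _ => hc k).trans (Finset.sum_le_sum fun k _ => hcr k)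
      _ ≤ dist (R m) (R n) := by
          rw [Finset.sum_Ico_eq_sub _ hnm]
          exact le_abs_self _
  intro ε hε
  obtain ⟨N, hN⟩ :=
    Metric.cauchySeq_iff.1 hr.hasSum.tendsto_sum_nat.cauchySeq (√ε) (Real.sqrt_pos.2 hε)
  refine ⟨N, fun m hm n hn => ?_⟩
  rw [← Real.sqrt_lt_sqrt_iff (E.graphNormSq_nonneg (E.domSubmodule.sub_mem (hS m) (hS n)))]
  rcases le_total n m with hnm | hmn
  · exact (hsub m n hnm).trans_lt (hN m hm n hn)
  · rw [E.graphNormSq_sub_comm (hS m) (hS n)]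
    exact (hsub n m hmn).trans_lt (hN n hn m hm)

lemma exists_tendsto_sum_range {c : ℕ → X → ℝ} (hc : ∀ k, c k ∈ E.dom) {r : ℕ → ℝ}
    (hr : Summable r) (hcr : ∀ k, √(graphNormSq μ E.q (c k)) ≤ r k) :
    ∃ Φ ∈ E.dom, Tendsto (fun n => eLpNorm (∑ k ∈ Finset.range n, c k - Φ) 2 μ) atTop (𝓝 0) ∧
      √(graphNormSq μ E.q Φ) ≤ ∑' k, r k := by
  set S := fun n => ∑ k ∈ Finset.range n, c k
  have hS n : S n ∈ E.dom := E.domSubmodule.sum_mem fun k _ => hc k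
  obtain ⟨Φ, hΦ, hL2, hgraph⟩ := E.exists_tendsto_of_cauchy hS (E.cauchy_sum_range hc hr hcr)
  have hr0 k : 0 ≤ r k := (Real.sqrt_nonneg _).trans (hcr k)
  have hlim : Tendsto (fun n => √(graphNormSq μ E.q (S n - Φ)) + ∑' k, r k) atTop
      (𝓝 (∑' k, r k)) := by
    simpa using hgraph.sqrt.add_const (∑' k, r k)
  refine ⟨Φ, hΦ, hL2, ge_of_tendsto' hlim fun n => ?_⟩
  calc √(graphNormSq μ E.q Φ) = √(graphNormSq μ E.q ((Φ - S n) + S n)) := by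
        rw [sub_add_cancel]
    _ ≤ √(graphNormSq μ E.q (Φ - S n)) + √(graphNormSq μ E.q (S n)) :=
        E.sqrt_graphNormSq_add_le (E.domSubmodule.sub_mem hΦ (hS n)) (hS n)
    _ ≤ √(graphNormSq μ E.q (S n - Φ)) + ∑' k, r k := by
        rw [E.graphNormSq_sub_comm hΦ (hS n)]
        gcongr
        calc √(graphNormSq μ E.q (S n)) ≤ ∑ k ∈ Finset.range n, r k :=
              (E.sqrt_graphNormSq_sum_le _ fun k _ => hc k).trans
                (Finset.sum_le_sum fun k _ => hcr k)
          _ ≤ ∑' k, r k := hr.sum_le_tsum _ fun k _ => hr0 k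

end DirichletForm

section Capacity

variable [TopologicalSpace X] {μ : Measure X}

lemma relCap_eq_zero_iff (dom : Set (X → ℝ)) (q : (X → ℝ) → ℝ) (Ω A : Set X) :
    relCap μ dom q Ω A = 0 ↔ ∀ δ > 0, ∃ φ ∈ dom, ∃ V : Set X, IsOpen V ∧ A ⊆ V ∧
      (∀ᵐ x ∂μ, x ∈ V ∩ Ω → 1 ≤ φ x) ∧ graphNormSq μ q φ < δ := by
  rw [relCap, ← bot_eq_zero, sInf_eq_bot]
  constructor
  · intro h δ hδ
    obtain ⟨_, ⟨φ, hφ, V, hV, hAV, h1, rfl⟩, hlt⟩ := h (ENNReal.ofReal δ) (by simpa using hδ)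
    exact ⟨φ, hφ, V, hV, hAV, h1, (ENNReal.ofReal_lt_ofReal_iff hδ).1 hlt⟩
  · intro h b hb
    obtain ⟨δ, -, hδ, hδb⟩ := ENNReal.lt_iff_exists_real_btwn.1 hb
    obtain ⟨φ, hφ, V, hV, hAV, h1, hlt⟩ := h δ (by simpa using hδ)
    exact ⟨_, ⟨φ, hφ, V, hV, hAV, h1, rfl⟩,
      (ENNReal.ofReal_lt_ofReal_iff (by simpa using hδ)).2 hlt |>.trans hδb⟩

lemma relCap_iUnion_eq_zero (E : DirichletForm μ) (Ω : Set X) {A : ℕ → Set X}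
    (hA : ∀ k, relCap μ E.dom E.q Ω (A k) = 0) : relCap μ E.dom E.q Ω (⋃ k, A k) = 0 := by
  refine (relCap_eq_zero_iff _ _ _ _).2 fun δ hδ => ?_
  set r : ℕ → ℝ := fun k => √δ / 2 / 2 / 2 ^ k
  have hr k : 0 < r k := by positivity
  choose φ hφ V hV hAV h1 hsmall using fun k =>
    (relCap_eq_zero_iff _ _ _ _).1 (hA k) (r k ^ 2) (by positivity)
  -- cut off at `1`, the witnesses can be summed and the sum still dominates each of them
  have hcut k : cut (φ k) ∈ E.dom := (E.markov _ (hφ k)).1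
  have hcutr k : √(graphNormSq μ E.q (cut (φ k))) ≤ r k :=
    (Real.sqrt_le_sqrt ((E.graphNormSq_cut_le (hφ k)).trans (hsmall k).le)).trans_eq
      (Real.sqrt_sq (hr k).le)
  obtain ⟨Φ, hΦ, hL2, hΦr⟩ :=
    E.exists_tendsto_sum_range hcut (summable_geometric_two' (√δ / 2)) hcutr
  rw [tsum_geometric_two'] at hΦr
  have hge k : cut (φ k) ≤ᵐ[μ] Φ := by
    refine ae_le_of_tendsto_eLpNorm
      (fun n => (E.dom_memLp _ (E.domSubmodule.sum_mem fun j _ => hcut j)).aestronglyMeasurable)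
      (E.dom_memLp _ hΦ).aestronglyMeasurable hL2
      ((eventually_gt_atTop k).mono fun n hn => ae_of_all _ fun x => ?_)
    rw [Finset.sum_apply]
    exact Finset.single_le_sum (f := fun j => cut (φ j) x) (fun j _ => le_max_left _ _)
      (Finset.mem_range.2 hn)
  refine ⟨Φ, hΦ, ⋃ k, V k, isOpen_iUnion hV, iUnion_mono hAV, ?_, ?_⟩
  · filter_upwards [ae_all_iff.2 hge, ae_all_iff.2 h1] with x hgex h1x ⟨hxV, hxΩ⟩
    obtain ⟨k, hk⟩ := mem_iUnion.1 hxV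
    have hcut1 : cut (φ k) x = 1 := by
      rw [cut, min_eq_right (h1x k ⟨hk, hxΩ⟩), max_eq_right zero_le_one]
    exact hcut1 ▸ hgex k
  · rw [← Real.sqrt_lt_sqrt_iff (E.graphNormSq_nonneg hΦ)]
    exact hΦr.trans_lt (half_lt_self (Real.sqrt_pos.2 hδ))

end Capacity

def L2Invariant (μ : Measure X) (S : ℝ → (X → ℝ) → (X → ℝ)) (Ω : Set X) : Prop :=
  ∀ t > 0, ∀ φ : X → ℝ, MemL2 μ Ω φ → S t φ =ᵐ[μ] Ω.indicator (S t φ)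

lemma memL2_indicator {μ : Measure X} {Ω : Set X} (hΩ : MeasurableSet Ω) {φ : X → ℝ}
    (hφ : MemLp φ 2 μ) : MemL2 μ Ω (Ω.indicator φ) :=
  ⟨hφ.indicator hΩ, by rw [indicator_indicator, inter_self]⟩

namespace IsSubmarkovSemigroupOn

variable {μ : Measure X} {Y : Set X} {dom : Set (X → ℝ)} {q : (X → ℝ) → ℝ}
  {S : ℝ → (X → ℝ) → (X → ℝ)}

lemma integral_mul_sub_nonneg (hS : IsSubmarkovSemigroupOn μ Y dom q S) {t : ℝ} (ht : 0 < t)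
    {φ : X → ℝ} (hφ : MemLp φ 2 μ) : 0 ≤ ∫ x, φ x * (φ x - S t φ x) ∂μ := by
  have ht2 : 0 < t / 2 := half_pos ht
  set ψ := S (t / 2) φ
  have hψ : MemLp ψ 2 μ := hS.memLp _ ht2 φ hφ
  -- `(φ, S_t φ) = ‖S_{t/2} φ‖² ≤ ‖φ‖²`
  have hhalf : S t φ =ᵐ[μ] S (t / 2) ψ := by
    simpa using hS.semigroup _ ht2 _ ht2 φ hφ
  have hcross : ∫ x, φ x * S t φ x ∂μ = ∫ x, ψ x ^ 2 ∂μ := by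
    rw [integral_congr_ae (hhalf.mono fun x hx => by rw [hx])]
    simp only [mul_comm (φ _), hS.symmetric _ ht2 ψ φ hψ hφ, sq]
    rfl
  have hcontr : ∫ x, ψ x ^ 2 ∂μ ≤ ∫ x, φ x ^ 2 ∂μ := by
    rw [integral_sq_eq_sq_toReal_eLpNorm hψ, integral_sq_eq_sq_toReal_eLpNorm hφ]
    gcongr
    · exact hφ.eLpNorm_ne_top
    · exact hS.contraction _ ht2 φ hφ
  have hS2 : MemLp (S t φ) 2 μ := hS.memLp t ht φ hφ
  simp only [mul_sub]
  rw [integral_sub (integrable_mul_of_memLp_two hφ hφ) (integrable_mul_of_memLp_two hφ hS2),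
    hcross]
  simp only [← sq]
  linarith

lemma l2Invariant_compl (hS : IsSubmarkovSemigroupOn μ Y dom q S) {Ω : Set X}
    (hΩ : MeasurableSet Ω) (hinv : L2Invariant μ S Ω) : L2Invariant μ S Ωᶜ := by
  intro t ht φ hφ
  set a := Ω.indicator (S t φ) with ha_def
  have ha : MemL2 μ Ω a := memL2_indicator hΩ (hS.memLp t ht φ hφ.1)
  -- `‖1_Ω S_t φ‖² = (φ, S_t (1_Ω S_t φ)) = 0`, since `φ ⟂ L₂(Ω)` and `L₂(Ω)` is invariant
  have hortho : ∫ x, φ x * S t a x ∂μ = 0 := by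
    refine integral_eq_zero_of_ae ?_
    filter_upwards [hφ.2, hinv t ht a ha] with x hφx hax
    rw [Pi.zero_apply, hφx, hax]
    by_cases hx : x ∈ Ω <;> simp [hx]
  have hnorm : ∫ x, a x ^ 2 ∂μ = 0 := by
    rw [← hortho, ← hS.symmetric t ht φ a hφ.1 ha.1]
    congr 1 with x
    by_cases hx : x ∈ Ω <;> simp [ha_def, sq, hx]
  have ha0 : a =ᵐ[μ] 0 := by
    filter_upwards [(integral_eq_zero_iff_of_nonneg (fun x => sq_nonneg (a x))
      ha.1.integrable_sq).1 hnorm] with x hx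
    exact pow_eq_zero_iff two_ne_zero |>.1 hx
  filter_upwards [ha0] with x hx
  by_cases hxΩ : x ∈ Ω
  · simpa [ha_def, hxΩ] using hx
  · simp [hxΩ]

lemma integral_indicator_mul_sub_le (hS : IsSubmarkovSemigroupOn μ Y dom q S) {Ω : Set X}
    (hΩ : MeasurableSet Ω) (hinv : L2Invariant μ S Ω) {t : ℝ} (ht : 0 < t) {η : X → ℝ}
    (hη : MemLp η 2 μ) :
    ∫ x, Ω.indicator η x * (Ω.indicator η x - S t (Ω.indicator η) x) ∂μ
      ≤ ∫ x, η x * (η x - S t η x) ∂μ := by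
  set a := Ω.indicator η with ha_def
  set b := Ωᶜ.indicator η with hb_def
  have ha : MemL2 μ Ω a := memL2_indicator hΩ hη
  have hb : MemL2 μ Ωᶜ b := memL2_indicator hΩ.compl hη
  have hab : a + b = η := indicator_self_add_compl Ω η
  have hsplit : (fun x => η x * (η x - S t η x)) =ᵐ[μ]
      fun x => a x * (a x - S t a x) + b x * (b x - S t b x) := by
    filter_upwards [hS.map_add t ht a b ha.1 hb.1, hinv t ht a ha,
      hS.l2Invariant_compl hΩ hinv t ht b hb] with x hadd hSa hSb
    rw [← hab, Pi.add_apply, hadd, Pi.add_apply, hSa, hSb]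
    by_cases hx : x ∈ Ω <;> simp [ha_def, hb_def, hx]
  have hint (c : X → ℝ) (hc : MemLp c 2 μ) :
      Integrable (fun x => c x * (c x - S t c x)) μ :=
    integrable_mul_of_memLp_two hc (hc.sub (hS.memLp t ht c hc))
  rw [integral_congr_ae hsplit, integral_add (hint a ha.1) (hint b hb.1)]
  linarith [hS.integral_mul_sub_nonneg ht hb.1]

end IsSubmarkovSemigroupOn

lemma mem_relaxDom_of_mem {μ : Measure X} {dom : Set (X → ℝ)} {q : (X → ℝ) → ℝ} {η : X → ℝ}
    (hη : η ∈ dom) (hη2 : MemLp η 2 μ) : η ∈ relaxDom μ dom q := by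
  have hconst : relaxVal μ dom q η ≤ atTop.liminf fun _ : ℕ => ENNReal.ofReal (q η) :=
    iInf_le_of_le (fun _ => η) <| iInf_le_of_le (fun _ => hη) <| iInf_le _ (by simp)
  rw [liminf_const] at hconst
  exact ⟨hη2, ne_top_of_le_ne_top ofReal_ne_top hconst⟩

section DirichletNeumann

variable {μ : Measure X} {Ω : Set X} {SD SN : ℝ → (X → ℝ) → (X → ℝ)}
  {domD domN : Set (X → ℝ)} {qD qN : (X → ℝ) → ℝ}

lemma l2Invariant_of_ae_eq (hSD : IsSubmarkovSemigroupOn μ Ω domD qD SD)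
    (heq : ∀ t > 0, ∀ φ : X → ℝ, MemL2 μ Ω φ → SD t φ =ᵐ[μ] SN t φ) : L2Invariant μ SN Ω := by
  intro t ht φ hφ
  filter_upwards [heq t ht φ hφ, hSD.supported t ht φ hφ.1] with x hx hsupp
  by_cases hxΩ : x ∈ Ω
  · rw [indicator_of_mem hxΩ]
  · rw [indicator_of_notMem hxΩ, ← hx, hsupp, indicator_of_notMem hxΩ]

lemma exists_mem_domD_indicator_ae_eq (hΩ : MeasurableSet Ω)
    (hSD : IsSubmarkovSemigroupOn μ Ω domD qD SD)
    (hSN : IsSubmarkovSemigroupOn μ univ domN qN SN)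
    (heq : ∀ t > 0, ∀ φ : X → ℝ, MemL2 μ Ω φ → SD t φ =ᵐ[μ] SN t φ)
    {η : X → ℝ} (hη : η ∈ domN) (hη2 : MemLp η 2 μ) : ∃ ψ ∈ domD, Ω.indicator η =ᵐ[μ] ψ := by
  obtain ⟨B, hB⟩ := (hSN.mem_dom_iff η hη2 (by rw [indicator_univ])).1 ⟨η, hη, .rfl⟩
  have ha : MemL2 μ Ω (Ω.indicator η) := memL2_indicator hΩ hη2
  refine (hSD.mem_dom_iff _ ha.1 ha.2).2 ⟨B, ?_⟩
  rintro _ ⟨t, ht, rfl⟩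
  calc t⁻¹ * ∫ x, Ω.indicator η x * (Ω.indicator η x - SD t (Ω.indicator η) x) ∂μ
      = t⁻¹ * ∫ x, Ω.indicator η x * (Ω.indicator η x - SN t (Ω.indicator η) x) ∂μ := by
        congr 1
        refine integral_congr_ae ?_
        filter_upwards [heq t ht _ ha] with x hx
        rw [hx]
    _ ≤ t⁻¹ * ∫ x, η x * (η x - SN t η x) ∂μ :=
        mul_le_mul_of_nonneg_left
          (hSN.integral_indicator_mul_sub_le hΩ (l2Invariant_of_ae_eq hSD heq) ht hη2)
          (inv_nonneg.2 ht.le)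
    _ ≤ B := hB ⟨t, ht, rfl⟩

end DirichletNeumann

section Topology

variable [TopologicalSpace X] [RegularSpace X] [LocallyCompactSpace X] {μ : Measure X}
  {E : DirichletForm μ}

lemma DenseInC0.exists_one_le_on_nhds (hdense : DenseInC0 E) {K : Set X} (hK : IsCompact K) :
    ∃ η ∈ E.dom, ∃ U : Set X, IsOpen U ∧ K ⊆ U ∧ ∀ x ∈ U, 1 ≤ η x := by
  obtain ⟨g, hgK, -, hgc, -⟩ :=
    exists_continuous_one_zero_of_isCompact hK isClosed_empty (disjoint_empty K)
  obtain ⟨η, hη, hηc, -, hηg⟩ := hdense (fun x => 2 * g x) (by fun_prop)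
    (by simpa using hgc.is_zero_at_infty.const_mul 2) 1 one_pos
  refine ⟨η, hη, {x | 1 < η x}, isOpen_lt continuous_const hηc, fun x hx => ?_,
    fun x hx => le_of_lt hx⟩
  have := (abs_lt.1 (hηg x)).1
  simp only [hgK hx, Pi.one_apply] at this
  show 1 < η x
  linarith

lemma relCap_eq_zero_of_isCompact (hdense : DenseInC0 E) {Ω : Set X}
    (hind : ∀ η ∈ E.dom, ∃ ψ ∈ E.domD Ω, Ω.indicator η =ᵐ[μ] ψ)
    {K : Set X} (hK : IsCompact K) (hKΩ : Disjoint K Ω) : relCap μ E.dom E.q Ω K = 0 := by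
  obtain ⟨η, hη, U, hU, hKU, hηU⟩ := hdense.exists_one_le_on_nhds hK
  obtain ⟨ψ, ⟨hψ, f, hf, hlim⟩, hψη⟩ := hind η hη
  refine (relCap_eq_zero_iff _ _ _ _).2 fun δ hδ => ?_
  obtain ⟨n, hn⟩ := (hlim.eventually_lt_const hδ).exists
  obtain ⟨hfn, -, hfnΩ⟩ := hf n
  refine ⟨ψ - f n, E.domSubmodule.sub_mem hψ hfn, U \ tsupport (f n),
    hU.sdiff (isClosed_tsupport _),
    fun x hx => ⟨hKU hx, fun hxf => disjoint_left.1 hKΩ hx (hfnΩ hxf)⟩, ?_, ?_⟩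
  · filter_upwards [hψη] with x hx ⟨⟨hxU, hxf⟩, hxΩ⟩
    rw [Pi.sub_apply, image_eq_zero_of_notMem_tsupport hxf, sub_zero, ← hx,
      indicator_of_mem hxΩ]
    exact hηU x hxU
  · rwa [E.graphNormSq_sub_comm hψ hfn]

end Topology

section Statements

variable [MetricSpace X] [BorelSpace X] [LocallyCompactSpace X] [SigmaCompactSpace X]
variable {μ : Measure X} [Measure.Regular μ] [Measure.IsOpenPosMeasure μ]

theorem statement10_general (E : DirichletForm μ) (hdense : DenseInC0 E)
    (Ω : Set X) (hΩ : IsOpen Ω) (SD SN : ℝ → (X → ℝ) → (X → ℝ))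
    (hSD : IsSubmarkovSemigroupOn μ Ω (E.domD Ω) E.q SD)
    (hSN : IsSubmarkovSemigroupOn μ Set.univ (relaxDom μ E.dom (neumann E Ω))
      (relaxQ μ E.dom (neumann E Ω)) SN)
    (heq : ∀ t > 0, ∀ φ : X → ℝ, MemL2 μ Ω φ → SD t φ =ᵐ[μ] SN t φ) :
    (∀ t > 0, ∀ φ : X → ℝ, MemL2 μ Ω φ → SN t φ =ᵐ[μ] Ω.indicator (SN t φ)) ∧
    relCap μ E.dom E.q Ω (frontier Ω) = 0 := by
  refine ⟨l2Invariant_of_ae_eq hSD heq, ?_⟩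
  have hind (η : X → ℝ) (hη : η ∈ E.dom) : ∃ ψ ∈ E.domD Ω, Ω.indicator η =ᵐ[μ] ψ :=
    exists_mem_domD_indicator_ae_eq hΩ.measurableSet hSD hSN heq
      (mem_relaxDom_of_mem hη (E.dom_memLp η hη)) (E.dom_memLp η hη)
  have hfrontier : frontier Ω = ⋃ k, compactCovering X k ∩ frontier Ω := by
    rw [← iUnion_inter, iUnion_compactCovering, univ_inter]
  rw [hfrontier]
  refine relCap_iUnion_eq_zero E Ω fun k => relCap_eq_zero_of_isCompact hdense hind
    ((isCompact_compactCovering X k).inter_right isClosed_frontier) ?_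
  exact (disjoint_frontier_iff_isOpen.2 hΩ).mono_left inter_subset_right

/-- If `S^D_t φ = S^N_t φ` for all `φ ∈ L₂(Ω)` and `t > 0`, then `L₂(Ω)` is
`S^N`-invariant and `cap_Ω(∂Ω) = 0`. -/
theorem statement10 (E : DirichletForm μ) (hloc : IsLocal E) (hdense : DenseInC0 E)
    (Ω : Set X) (hΩ : IsOpen Ω) (SD SN : ℝ → (X → ℝ) → (X → ℝ))
    (hSD : IsSubmarkovSemigroupOn μ Ω (E.domD Ω) E.q SD)
    (hSN : IsSubmarkovSemigroupOn μ Set.univ (relaxDom μ E.dom (neumann E Ω))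
      (relaxQ μ E.dom (neumann E Ω)) SN)
    (heq : ∀ t > 0, ∀ φ : X → ℝ, MemL2 μ Ω φ → SD t φ =ᵐ[μ] SN t φ) :
    (∀ t > 0, ∀ φ : X → ℝ, MemL2 μ Ω φ → SN t φ =ᵐ[μ] Ω.indicator (SN t φ)) ∧
    relCap μ E.dom E.q Ω (frontier Ω) = 0 :=
  statement10_general E hdense Ω hΩ SD SN hSD hSN heq

end Statements

end DirichletPaper
end
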